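/- Let H be a Hopf algebra, g a group-like element, and x a nonzero (1, g)-primitive element with x² = 0 and gx = -xg over a field of characteristic 0. Suppose R is a coquasitriangular structure on the sub-Hopf algebra generated by g and x, with R(g, g) = -1. Then R(x, x)(1 - g²) = 0; in particular if g² ≠ 1 then R(x, x) = 0. -/

import Mathlib

open TensorProduct Coalgebra

section Defs
variable (k H : Type*) [CommSemiring k] [Semiring H] [Bialgebra k H]

/-- An element is group-like if it is counit-1 and comultiplies diagonally. -/
def IsGroupLike (a : H) : Prop :=
  Coalgebra.counit (R := k) a = 1 ∧ Coalgebra.comul (R := k) a = a ⊗ₜ[k] a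

/-- `x` is `(1,g)`-primitive (skew-primitive). -/
def IsSkewPrimitive (g x : H) : Prop :=
  Coalgebra.comul (R := k) x = g ⊗ₜ[k] x + x ⊗ₜ[k] (1 : H)

/-- Convolution product of two functionals on a coalgebra. -/
noncomputable def convProd {C : Type*} [AddCommMonoid C] [Module k C] [CoalgebraStruct k C]
    (f g : C →ₗ[k] k) : C →ₗ[k] k :=
  LinearMap.mul' k k ∘ₗ TensorProduct.map f g ∘ₗ Coalgebra.comul

/-- Multiplication in the opposite order, `a ⊗ b ↦ b * a`. -/
noncomputable def swapMul : H ⊗[k] H →ₗ[k] H :=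
  LinearMap.mul' k H ∘ₗ (TensorProduct.comm k H H).toLinearMap

/-- A coquasitriangular structure on a bialgebra `H`: a convolution-invertible
bilinear form `R : H × H → k` satisfying `R(ab,c) = R(a,c₁)R(b,c₂)`,
`R(a,bc) = R(a₁,c)R(a₂,b)` and `b₁a₁R(a₂,b₂) = R(a₁,b₁)a₂b₂`. -/
structure CoquasiTriangular where
  /-- the universal `R`-form, as a bilinear map -/
  R : H →ₗ[k] H →ₗ[k] k
  /-- its convolution inverse -/
  Rbar : H →ₗ[k] H →ₗ[k] k
  inv_left : convProd k (TensorProduct.lift R) (TensorProduct.lift Rbar)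
      = Coalgebra.counit (R := k) (A := H ⊗[k] H)
  inv_right : convProd k (TensorProduct.lift Rbar) (TensorProduct.lift R)
      = Coalgebra.counit (R := k) (A := H ⊗[k] H)
  prod_left : ∀ a b : H, R (a * b)
      = LinearMap.mul' k k ∘ₗ TensorProduct.map (R a) (R b) ∘ₗ Coalgebra.comul
  prod_right : ∀ b c : H, R.flip (b * c)
      = LinearMap.mul' k k ∘ₗ TensorProduct.map (R.flip c) (R.flip b) ∘ₗ Coalgebra.comul
  comm : (TensorProduct.rid k H).toLinearMap
        ∘ₗ TensorProduct.map (swapMul k H) (TensorProduct.lift R)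
        ∘ₗ Coalgebra.comul (R := k) (A := H ⊗[k] H)
      = (TensorProduct.lid k H).toLinearMap
        ∘ₗ TensorProduct.map (TensorProduct.lift R) (LinearMap.mul' k H)
        ∘ₗ Coalgebra.comul (R := k) (A := H ⊗[k] H)

end Defs

/-! The axiom `b₁a₁R(a₂,b₂) = R(a₁,b₁)a₂b₂` at `a = b = x`, with `Δx = g ⊗ x + x ⊗ 1`, reads
`R(x,x)g² + R(1,x)gx + R(x,1)xg + R(1,1)x² = R(g,g)x² + R(x,g)x + R(g,x)x + R(x,x)`.
Both `R(·,1)` and `R(1,·)` are convolution idempotents with a convolution inverse, hence equal `ε`,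
and `ε(x) = 0`; moreover `R(x,g)² = R(x²,g) = 0`, so `R(x,g) = 0` in the reduced ring `k`, and
likewise `R(g,x) = 0`. With `x² = 0` only `R(x,x)g² = R(x,x)` survives. -/

open LinearMap WithConv

theorem convProd_comp_coalgHom {k C D : Type*} [CommSemiring k] [AddCommMonoid C] [Module k C]
    [CoalgebraStruct k C] [AddCommMonoid D] [Module k D] [Coalgebra k D]
    (f f' : D →ₗ[k] k) (φ : C →ₗc[k] D) :
    convProd k (f ∘ₗ φ.toLinearMap) (f' ∘ₗ φ.toLinearMap) = convProd k f f' ∘ₗ φ.toLinearMap :=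
  (convMul_comp_coalgHom_distrib (toConv f) (toConv f') φ).symm

theorem eq_counit_of_convProd_self_eq {k C : Type*} [CommSemiring k] [AddCommMonoid C] [Module k C]
    [Coalgebra k C] {f f' : C →ₗ[k] k} (hff : convProd k f f = f)
    (hff' : convProd k f f' = counit) : f = counit := by
  have hinv : toConv f * toConv f' = 1 := by
    ext c
    simp [← hff', convProd]
  have hone : toConv f = 1 :=
    calc toConv f = toConv f * (toConv f * toConv f') := by rw [hinv, mul_one]
      _ = toConv f * toConv f' := by rw [← mul_assoc]; exact congrArg (· * _) (congrArg toConv hff)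
      _ = 1 := hinv
  ext c
  simpa using congr($hone c)

theorem IsSkewPrimitive.counit_eq_zero {k H : Type*} [CommRing k] [Ring H] [Bialgebra k H]
    {g x : H} (hx : IsSkewPrimitive k H g x) (hg : IsGroupLike k H g) :
    counit (R := k) x = 0 := by
  have h := Coalgebra.lTensor_counit_comul (R := k) x
  rw [hx, map_add, lTensor_tmul, lTensor_tmul, Bialgebra.counit_one, add_eq_right] at h
  simpa [hg.1] using congr(counit (R := k) (TensorProduct.rid k H $h))

namespace CoquasiTriangular

variable {k H : Type*} [CommSemiring k] [Semiring H] [Bialgebra k H]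

variable (k H) in
noncomputable def tmulOneCoalgHom : H →ₗc[k] H ⊗[k] H :=
  (Coalgebra.TensorProduct.map (CoalgHom.id k H) (Bialgebra.unitBialgHom k H : k →ₗc[k] H)).comp
    (Coalgebra.TensorProduct.rid k k H).symm.toCoalgHom

variable (k H) in
noncomputable def oneTmulCoalgHom : H →ₗc[k] H ⊗[k] H :=
  (Coalgebra.TensorProduct.map (Bialgebra.unitBialgHom k H : k →ₗc[k] H) (CoalgHom.id k H)).comp
    (Coalgebra.TensorProduct.lid k H).symm.toCoalgHom

@[simp] theorem tmulOneCoalgHom_apply (a : H) : tmulOneCoalgHom k H a = a ⊗ₜ 1 := by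
  simp [tmulOneCoalgHom, Coalgebra.TensorProduct.rid_symm_apply]

@[simp] theorem oneTmulCoalgHom_apply (a : H) : oneTmulCoalgHom k H a = 1 ⊗ₜ a := by
  simp [oneTmulCoalgHom, Coalgebra.TensorProduct.lid_symm_apply]

variable (Q : CoquasiTriangular k H)

theorem R_apply_one (a : H) : Q.R a 1 = counit a := by
  have hR : ∀ F : H →ₗ[k] H →ₗ[k] k, F.flip 1 = lift F ∘ₗ (tmulOneCoalgHom k H).toLinearMap :=
    fun F ↦ by ext; simp
  have hidem : convProd k (Q.R.flip 1) (Q.R.flip 1) = Q.R.flip 1 := by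
    rw [convProd, ← Q.prod_right, one_mul]
  have hinv : convProd k (Q.R.flip 1) (Q.Rbar.flip 1) = counit := by
    rw [hR, hR, convProd_comp_coalgHom, Q.inv_left, CoalgHom.counit_comp]
  exact congr($(eq_counit_of_convProd_self_eq hidem hinv) a)

theorem R_one_apply (a : H) : Q.R 1 a = counit a := by
  have hR : ∀ F : H →ₗ[k] H →ₗ[k] k, F 1 = lift F ∘ₗ (oneTmulCoalgHom k H).toLinearMap :=
    fun F ↦ by ext; simp
  have hidem : convProd k (Q.R 1) (Q.R 1) = Q.R 1 := by
    rw [convProd, ← Q.prod_left, one_mul]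
  have hinv : convProd k (Q.R 1) (Q.Rbar 1) = counit := by
    rw [hR, hR, convProd_comp_coalgHom, Q.inv_left, CoalgHom.counit_comp]
  exact congr($(eq_counit_of_convProd_self_eq hidem hinv) a)

theorem R_mul_apply_of_isGroupLike (a b : H) {c : H} (hc : IsGroupLike k H c) :
    Q.R (a * b) c = Q.R a c * Q.R b c := by
  simp [Q.prod_left, hc.2]

theorem R_apply_mul_of_isGroupLike {a : H} (hc : IsGroupLike k H a) (b c : H) :
    Q.R a (b * c) = Q.R a c * Q.R a b := by
  simpa [hc.2] using congr($(Q.prod_right b c) a)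

theorem R_eq_zero_of_mul_self_eq_zero_left [IsReduced k] {g x : H} (hg : IsGroupLike k H g)
    (hx : x * x = 0) : Q.R x g = 0 :=
  IsReduced.eq_zero _ ⟨2, by
    rw [sq, ← Q.R_mul_apply_of_isGroupLike _ _ hg, hx, map_zero, LinearMap.zero_apply]⟩

theorem R_eq_zero_of_mul_self_eq_zero_right [IsReduced k] {g x : H} (hg : IsGroupLike k H g)
    (hx : x * x = 0) : Q.R g x = 0 :=
  IsReduced.eq_zero _ ⟨2, by rw [sq, ← Q.R_apply_mul_of_isGroupLike hg, hx, map_zero]⟩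

theorem comm_tmul_of_isSkewPrimitive {g h x y : H} (hx : IsSkewPrimitive k H g x)
    (hy : IsSkewPrimitive k H h y) :
    Q.R x y • (h * g) + Q.R 1 y • (h * x) + (Q.R x 1 • (y * g) + Q.R 1 1 • (y * x)) =
      Q.R g h • (x * y) + Q.R x h • y + (Q.R g y • x + Q.R x y • 1) := by
  unfold IsSkewPrimitive at hx hy
  simpa [TensorProduct.comul_def, hx, hy, swapMul, tmul_add, add_tmul] using
    congr($(Q.comm) (x ⊗ₜ[k] y))

end CoquasiTriangular

theorem Rxx_smul_one_sub_gsq_eq_zero_general (k H : Type*) [Field k]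
    [Ring H] [HopfAlgebra k H] (Q : CoquasiTriangular k H) (g x : H)
    (hg : IsGroupLike k H g) (hx : IsSkewPrimitive k H g x)
    (hx2 : x * x = 0) :
    Q.R x x • ((1 : H) - g * g) = 0 ∧ (g * g ≠ 1 → Q.R x x = 0) := by
  have hcomm := Q.comm_tmul_of_isSkewPrimitive hx hx
  simp only [Q.R_apply_one, Q.R_one_apply, hx.counit_eq_zero hg, hx2,
    Q.R_eq_zero_of_mul_self_eq_zero_left hg hx2, Q.R_eq_zero_of_mul_self_eq_zero_right hg hx2,
    Bialgebra.counit_one, zero_smul, smul_zero, zero_add, add_zero] at hcomm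
  have hsmul : Q.R x x • ((1 : H) - g * g) = 0 := by rw [smul_sub, hcomm, sub_self]
  refine ⟨hsmul, fun hgg ↦ ?_⟩
  exact (smul_eq_zero.mp hsmul).resolve_right (sub_ne_zero.mpr (Ne.symm hgg))

/-- If `x ≠ 0` is `(1,g)`-primitive with `x² = 0` and
`gx = -xg`, and `R` is a coquasitriangular structure with `R(g,g) = -1`
(char `k` = 0), then `R(x,x)(1 - g²) = 0`; in particular if `g² ≠ 1` then
`R(x,x) = 0`. -/
theorem Rxx_smul_one_sub_gsq_eq_zero (k H : Type*) [Field k] [CharZero k]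
    [Ring H] [HopfAlgebra k H] (Q : CoquasiTriangular k H) (g x : H)
    (hg : IsGroupLike k H g) (hx : IsSkewPrimitive k H g x)
    (hx0 : x ≠ 0) (hx2 : x * x = 0) (hgx : g * x = -(x * g))
    (hgg : Q.R g g = -1) :
    Q.R x x • ((1 : H) - g * g) = 0 ∧ (g * g ≠ 1 → Q.R x x = 0) :=
  Rxx_smul_one_sub_gsq_eq_zero_general k H Q g x hg hx hx2
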